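/- Let k ≥ 1 and let β_1, …, β_k > -1/2. Define H(g)(x) = ( ∑_{j=1}^k x_j^2 )^{-∑_{j=1}^k (β_j + 1/2)} ∫_0^{x_1/2} ⋯ ∫_0^{x_k/2} g(y) ∏_{j=1}^k y_j^{2β_j} dy, x ∈ (0,∞)^k. Then H is of weak type (1,1) with respect to μ_β: there is C > 0 such that for all γ > 0 and all g ∈ L^1(μ_β), μ_β({ x ∈ (0,∞)^k : |H(g)(x)| > γ }) ≤ (C/γ) ‖g‖_{L^1(μ_β)}. -/

import Mathlib

open Real MeasureTheory Set
open scoped ENNReal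

/-- The measure on `(0,∞)^k` with density `∏ x_j^{2β_j}` w.r.t. Lebesgue measure. -/
noncomputable def muBeta {k : ℕ} (β : Fin k → ℝ) : Measure (Fin k → ℝ) :=
  ((volume : Measure (Fin k → ℝ)).restrict {x | ∀ j, 0 < x j}).withDensity
    (fun x => ENNReal.ofReal (∏ j, x j ^ (2 * β j)))

/-- The Hardy-type operator
`H g (x) = (∑ x_j²)^{-∑(β_j+1/2)} ∫_0^{x_1/2} ⋯ ∫_0^{x_k/2} g(y) ∏ y_j^{2β_j} dy`. -/
noncomputable def Hop (k : ℕ) (β : Fin k → ℝ)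
    (g : (Fin k → ℝ) → ℝ) (x : Fin k → ℝ) : ℝ :=
  (∑ j, x j ^ 2) ^ (-(∑ j, (β j + 1/2))) *
    ∫ y in {y : Fin k → ℝ | ∀ j, 0 < y j ∧ y j < x j / 2}, g y * ∏ j, y j ^ (2 * β j)

/-!
The integration region of `H g (x)` lies in the positive orthant, so
`|H g (x)| ≤ |x|^{-2s} ‖g‖₁` with `s = ∑ⱼ (βⱼ + 1/2) > 0`. Hence, up to the `μ_β`-null complement
of the orthant, `{|H g| > γ}` lies in the cube `(0, a)^k` with `a^{2s} = ‖g‖₁ / γ`, and the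
`μ_β`-measure of that cube is `∏ⱼ a^{2βⱼ+1} / (2βⱼ+1) = (∏ⱼ (2βⱼ+1)⁻¹) ‖g‖₁ / γ`.
-/

lemma setIntegral_Ioo_zero_rpow {b a : ℝ} (hb : -1 < b) (ha : 0 ≤ a) :
    ∫ t in Ioo 0 a, t ^ b = a ^ (b + 1) / (b + 1) := by
  rw [← integral_Ioc_eq_integral_Ioo, ← intervalIntegral.integral_of_le ha,
    integral_rpow (Or.inl hb), Real.zero_rpow (by linarith), sub_zero]

lemma integrableOn_Ioo_zero_rpow {b a : ℝ} (hb : -1 < b) (ha : 0 ≤ a) :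
    IntegrableOn (fun t : ℝ => t ^ b) (Ioo 0 a) :=
  ((intervalIntegrable_iff_integrableOn_Ioc_of_le ha).mp
    (intervalIntegral.intervalIntegrable_rpow' hb)).mono_set Ioo_subset_Ioc_self

lemma lt_rpow_inv_of_lt_rpow_neg_sum_sq {ι : Type*} [Fintype ι] {x : ι → ℝ}
    (hx : ∀ j, 0 < x j) {s c γ : ℝ} (hs : 0 < s) (hγ : 0 < γ)
    (h : γ < (∑ j, x j ^ 2) ^ (-s) * c) (j : ι) : x j < (c / γ) ^ (2 * s)⁻¹ := by
  have hxj_le : x j ^ 2 ≤ ∑ i, x i ^ 2 :=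
    Finset.single_le_sum (fun i _ => sq_nonneg (x i)) (Finset.mem_univ j)
  have hS : 0 < ∑ i, x i ^ 2 := (pow_pos (hx j) 2).trans_le hxj_le
  have hSs : (∑ i, x i ^ 2) ^ s < c / γ := by
    rw [Real.rpow_neg hS.le, lt_inv_mul_iff₀ (Real.rpow_pos_of_pos hS s)] at h
    exact (lt_div_iff₀ hγ).2 (by linarith)
  have hxj : x j ^ (2 * s) < c / γ :=
    calc x j ^ (2 * s) = (x j ^ 2) ^ s := by rw [Real.rpow_mul (hx j).le]; norm_cast
      _ ≤ (∑ i, x i ^ 2) ^ s := Real.rpow_le_rpow (sq_nonneg _) hxj_le hs.le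
      _ < c / γ := hSs
  calc x j = (x j ^ (2 * s)) ^ (2 * s)⁻¹ := (Real.rpow_rpow_inv (hx j).le (by positivity)).symm
    _ < (c / γ) ^ (2 * s)⁻¹ :=
      Real.rpow_lt_rpow (Real.rpow_nonneg (hx j).le _) hxj (by positivity)

section muBeta

variable {k : ℕ} (β : Fin k → ℝ)

lemma measurableSet_setOf_forall_pos : MeasurableSet {x : Fin k → ℝ | ∀ j, 0 < x j} := by
  simp only [ofPred_forall]
  exact .iInter fun j => measurableSet_lt measurable_const (measurable_pi_apply j)

lemma muBeta_apply {s : Set (Fin k → ℝ)} (hs : MeasurableSet s) :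
    muBeta β s =
      ∫⁻ y in s ∩ {x | ∀ j, 0 < x j}, ENNReal.ofReal (∏ j, y j ^ (2 * β j)) := by
  rw [muBeta, withDensity_apply _ hs, Measure.restrict_restrict hs]

lemma muBeta_compl_setOf_forall_pos : muBeta β {x | ∀ j, 0 < x j}ᶜ = 0 := by
  rw [muBeta_apply β measurableSet_setOf_forall_pos.compl, compl_inter_self,
    Measure.restrict_empty, lintegral_zero_measure]

lemma muBeta_pi_Ioo (hβ : ∀ j, -1/2 < β j) {a : Fin k → ℝ} (ha : ∀ j, 0 ≤ a j) :
    muBeta β (univ.pi fun j => Ioo 0 (a j)) =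
      ENNReal.ofReal (∏ j, a j ^ (2 * β j + 1) / (2 * β j + 1)) := by
  have hb : ∀ j, -1 < 2 * β j := fun j => by linarith [hβ j]
  have hbox : MeasurableSet (univ.pi fun j => Ioo 0 (a j)) :=
    MeasurableSet.univ_pi fun _ => measurableSet_Ioo
  have hrestrict : (volume : Measure (Fin k → ℝ)).restrict (univ.pi fun j => Ioo 0 (a j)) =
      Measure.pi fun j => volume.restrict (Ioo 0 (a j)) := by
    rw [volume_pi, Measure.restrict_pi_pi]
  have hint : IntegrableOn (fun y : Fin k → ℝ => ∏ j, y j ^ (2 * β j))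
      (univ.pi fun j => Ioo 0 (a j)) := by
    rw [IntegrableOn, hrestrict]
    exact Integrable.fintype_prod fun j => integrableOn_Ioo_zero_rpow (hb j) (ha j)
  have hnonneg : 0 ≤ᵐ[volume.restrict (univ.pi fun j => Ioo 0 (a j))]
      fun y : Fin k → ℝ => ∏ j, y j ^ (2 * β j) :=
    ae_restrict_of_forall_mem hbox fun y hy =>
      Finset.prod_nonneg fun j _ => Real.rpow_nonneg (hy j (mem_univ j)).1.le _
  rw [muBeta_apply β hbox, inter_eq_left.2 fun y hy j => (hy j (mem_univ j)).1,
    ← ofReal_integral_eq_lintegral_ofReal hint hnonneg, hrestrict,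
    integral_fintype_prod_eq_prod fun j (t : ℝ) => t ^ (2 * β j)]
  simp only [setIntegral_Ioo_zero_rpow (hb _) (ha _)]

lemma eLpNorm_one_muBeta (g : (Fin k → ℝ) → ℝ) :
    eLpNorm g 1 (muBeta β) =
      ∫⁻ y in {x | ∀ j, 0 < x j}, ENNReal.ofReal (∏ j, y j ^ (2 * β j)) * ‖g y‖ₑ := by
  rw [eLpNorm_one_eq_lintegral_enorm, muBeta,
    lintegral_withDensity_eq_lintegral_mul_non_measurable _ (by fun_prop)
      (.of_forall fun _ => ENNReal.ofReal_lt_top)]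
  rfl

lemma norm_setIntegral_mul_density_le {g : (Fin k → ℝ) → ℝ} (hg : MemLp g 1 (muBeta β))
    {s : Set (Fin k → ℝ)} (hs : s ⊆ {x | ∀ j, 0 < x j}) :
    ‖∫ y in s, g y * ∏ j, y j ^ (2 * β j)‖ ≤ (eLpNorm g 1 (muBeta β)).toReal := by
  refine (norm_integral_le_lintegral_norm _).trans (ENNReal.toReal_mono hg.eLpNorm_ne_top ?_)
  rw [eLpNorm_one_muBeta]
  refine (lintegral_mono_set hs).trans_eq
    (setLIntegral_congr_fun measurableSet_setOf_forall_pos fun y hy => ?_)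
  have hw : 0 ≤ ∏ j, y j ^ (2 * β j) :=
    Finset.prod_nonneg fun j _ => Real.rpow_nonneg (hy j).le _
  rw [norm_mul, ENNReal.ofReal_mul (norm_nonneg _), ofReal_norm, Real.norm_of_nonneg hw,
    mul_comm]

lemma abs_Hop_le {g : (Fin k → ℝ) → ℝ} (hg : MemLp g 1 (muBeta β)) (x : Fin k → ℝ) :
    |Hop k β g x| ≤
      (∑ j, x j ^ 2) ^ (-∑ j, (β j + 1/2)) * (eLpNorm g 1 (muBeta β)).toReal := by
  have hpow : 0 ≤ (∑ j, x j ^ 2) ^ (-∑ j, (β j + 1/2)) :=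
    Real.rpow_nonneg (Finset.sum_nonneg fun j _ => sq_nonneg _) _
  rw [Hop, abs_mul, abs_of_nonneg hpow]
  exact mul_le_mul_of_nonneg_left
    (norm_setIntegral_mul_density_le β hg fun y hy j => (hy j).1) hpow

lemma setOf_lt_abs_Hop_inter_subset_pi_Ioo (hs : 0 < ∑ j, (β j + 1/2))
    {g : (Fin k → ℝ) → ℝ} (hg : MemLp g 1 (muBeta β)) {γ : ℝ} (hγ : 0 < γ) :
    {x | γ < |Hop k β g x|} ∩ {x | ∀ j, 0 < x j} ⊆
      univ.pi fun _ =>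
        Ioo 0 (((eLpNorm g 1 (muBeta β)).toReal / γ) ^ (2 * ∑ j, (β j + 1/2))⁻¹) :=
  fun x ⟨hlevel, hx⟩ j _ =>
    ⟨hx j, lt_rpow_inv_of_lt_rpow_neg_sum_sq hx hs hγ (hlevel.trans_le (abs_Hop_le β hg x)) j⟩

end muBeta

theorem Hop_weak_type (k : ℕ) (hk : 1 ≤ k) (β : Fin k → ℝ) (hβ : ∀ j, -1/2 < β j) :
    ∃ C > (0 : ℝ), ∀ γ : ℝ, 0 < γ → ∀ g : (Fin k → ℝ) → ℝ, MemLp g 1 (muBeta β) →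
      muBeta β {x | γ < |Hop k β g x|} ≤
        ENNReal.ofReal (C / γ) * eLpNorm g 1 (muBeta β) := by
  have hβ' : ∀ j, 0 < 2 * β j + 1 := fun j => by linarith [hβ j]
  have hs : 0 < ∑ j, (β j + 1/2) :=
    Finset.sum_pos (fun j _ => by linarith [hβ j]) ⟨⟨0, hk⟩, Finset.mem_univ _⟩
  have hC : 0 < ∏ j, (2 * β j + 1)⁻¹ := Finset.prod_pos fun j _ => inv_pos.2 (hβ' j)
  refine ⟨_, hC, fun γ hγ g hg => ?_⟩
  set M := (eLpNorm g 1 (muBeta β)).toReal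
  have hMγ : 0 ≤ M / γ := div_nonneg ENNReal.toReal_nonneg hγ.le
  set a := (M / γ) ^ (2 * ∑ j, (β j + 1/2))⁻¹
  have ha : 0 ≤ a := Real.rpow_nonneg hMγ _
  have hbox : ∏ j, a ^ (2 * β j + 1) / (2 * β j + 1) = (∏ j, (2 * β j + 1)⁻¹) / γ * M := by
    have hexp : ∑ j, (2 * β j + 1) = 2 * ∑ j, (β j + 1/2) := by
      rw [Finset.mul_sum]; exact Finset.sum_congr rfl fun j _ => by ring
    have hpow : ∏ j, a ^ (2 * β j + 1) = M / γ := by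
      rw [← Real.rpow_sum_of_nonneg ha fun j _ => (hβ' j).le, hexp,
        Real.rpow_inv_rpow hMγ (by positivity)]
    simp only [div_eq_mul_inv, Finset.prod_mul_distrib] at hpow ⊢
    rw [hpow]; ring
  calc muBeta β {x | γ < |Hop k β g x|}
      = muBeta β ({x | γ < |Hop k β g x|} ∩ {x | ∀ j, 0 < x j}) :=
        (measure_inter_conull (muBeta_compl_setOf_forall_pos β)).symm
    _ ≤ muBeta β (univ.pi fun _ => Ioo 0 a) :=
        measure_mono (setOf_lt_abs_Hop_inter_subset_pi_Ioo β hs hg hγ)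
    _ = ENNReal.ofReal ((∏ j, (2 * β j + 1)⁻¹) / γ) * eLpNorm g 1 (muBeta β) := by
        rw [muBeta_pi_Ioo β hβ fun _ => ha, hbox, ENNReal.ofReal_mul (div_nonneg hC.le hγ.le),
          ENNReal.ofReal_toReal hg.eLpNorm_ne_top]
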